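/- arXiv:0905.1024 — 6 statements merged into one kernel-verified Lean document; each statement's English description precedes it below -/
import Mathlib

section
/- Every local maximum stable set of a finite simple graph G is contained in some maximum stable set of G. -/
open Finset

variable {V : Type*}

/-- A stable (independent) set of vertices. -/
def StableSet (G : SimpleGraph V) (S : Finset V) : Prop :=
  ∀ x ∈ S, ∀ y ∈ S, ¬ G.Adj x y

/-- The closed neighborhood N[S] of a finite vertex set. -/
def closedNbhd [Fintype V] [DecidableEq V] (G : SimpleGraph V) [DecidableRel G.Adj]
    (S : Finset V) : Finset V :=
  S ∪ Finset.univ.filter (fun v => ∃ s ∈ S, G.Adj v s)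

/-- Ψ(G): the family of local maximum stable sets of `G`:
stable sets `S` that are maximum stable sets of the subgraph induced by `N[S]`. -/
def Psi [Fintype V] [DecidableEq V] (G : SimpleGraph V) [DecidableRel G.Adj] :
    Set (Finset V) :=
  {S | StableSet G S ∧
    ∀ T : Finset V, T ⊆ closedNbhd G S → StableSet G T → T.card ≤ S.card}

/-- A maximum stable set of `G`. -/
def MaximumStable (G : SimpleGraph V) (S : Finset V) : Prop :=
  StableSet G S ∧ ∀ T : Finset V, StableSet G T → T.card ≤ S.card

/-- The accessibility property of a set system. -/
def Accessible [DecidableEq V] (F : Set (Finset V)) : Prop :=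
  ∀ X ∈ F, X.Nonempty → ∃ x ∈ X, X.erase x ∈ F

/-- The exchange property of a set system. -/
def ExchangeProp [DecidableEq V] (F : Set (Finset V)) : Prop :=
  ∀ X ∈ F, ∀ Y ∈ F, X.card = Y.card + 1 → ∃ x ∈ X, x ∉ Y ∧ insert x Y ∈ F

/-- A greedoid: a nonempty set system satisfying accessibility and exchange. -/
def IsGreedoid [DecidableEq V] (F : Set (Finset V)) : Prop :=
  F.Nonempty ∧ Accessible F ∧ ExchangeProp F

/-- An accessibility chain for `S`: sets `f 1 ⊆ f 2 ⊆ ... ⊆ f |S| = S`,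
with `|f j| = j` and each `f j ∈ Ψ(G)`. -/
def HasAccessChain [Fintype V] [DecidableEq V] (G : SimpleGraph V) [DecidableRel G.Adj]
    (S : Finset V) : Prop :=
  ∃ f : ℕ → Finset V, f S.card = S ∧
    (∀ j, 1 ≤ j → j ≤ S.card → (f j).card = j ∧ f j ∈ Psi G) ∧
    (∀ j, 1 ≤ j → j < S.card → f j ⊆ f (j + 1))

/-- A matching `M` is uniquely restricted if it is the unique perfect matching of the
subgraph induced by the set of vertices it saturates. -/
def UniquelyRestricted (G : SimpleGraph V) (M : G.Subgraph) : Prop :=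
  M.IsMatching ∧ ∀ M' : G.Subgraph, M'.IsMatching → M'.support = M.support →
    M'.edgeSet = M.edgeSet

/-- A maximum matching: a matching of maximum cardinality. -/
def MaximumMatching (G : SimpleGraph V) (M : G.Subgraph) : Prop :=
  M.IsMatching ∧ ∀ M' : G.Subgraph, M'.IsMatching → M'.edgeSet.ncard ≤ M.edgeSet.ncard

/-- A cycle `c` is alternating with respect to the matching `M` if of any two incident
edges of `c` exactly one belongs to `M`. -/
def AlternatingCycle (G : SimpleGraph V) (M : G.Subgraph) {v : V} (c : G.Walk v v) : Prop :=
  c.IsCycle ∧ ∀ i : Fin c.edges.length,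
    (c.edges.get i ∈ M.edgeSet ↔
      c.edges.get ⟨(i.1 + 1) % c.edges.length,
        Nat.mod_lt _ (lt_of_le_of_lt (Nat.zero_le _) i.2)⟩ ∉ M.edgeSet)

/-- A unicyclic graph: it has a cycle, and all of its cycles have the same edge set. -/
def Unicyclic [DecidableEq V] (G : SimpleGraph V) : Prop :=
  (∃ (v : V) (c : G.Walk v v), c.IsCycle) ∧
  ∀ ⦃v : V⦄ (c : G.Walk v v) ⦃w : V⦄ (d : G.Walk w w), c.IsCycle → d.IsCycle →
    c.edges.toFinset = d.edges.toFinset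

/-- The stability number α(G). -/
noncomputable def alphaNum (G : SimpleGraph V) : ℕ :=
  sSup {n | ∃ S : Finset V, StableSet G S ∧ S.card = n}

/-- The matching number μ(G). -/
noncomputable def muNum (G : SimpleGraph V) : ℕ :=
  sSup {n | ∃ M : G.Subgraph, M.IsMatching ∧ M.edgeSet.ncard = n}

/-- A König–Egerváry graph: α(G) + μ(G) = |V(G)|. -/
def KonigEgervary (G : SimpleGraph V) [Fintype V] : Prop :=
  alphaNum G + muNum G = Fintype.card V

/-- Every local maximum stable set of a finite simple graph is contained in some
maximum stable set. -/
theorem psi_subset_maximum_stable [Fintype V] [DecidableEq V] (G : SimpleGraph V)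
    [DecidableRel G.Adj] (S : Finset V) (hS : S ∈ Psi G) :
    ∃ T : Finset V, MaximumStable G T ∧ S ⊆ T := by
  classical
  -- pick a maximum stable set T
  obtain ⟨T, hTmem, hTmax⟩ := Finset.exists_max_image
    ((Finset.univ.powerset).filter (fun X => StableSet G X)) Finset.card
    ⟨∅, by simp [StableSet]⟩
  have hTst : StableSet G T := (Finset.mem_filter.mp hTmem).2
  have hTmax' : ∀ X : Finset V, StableSet G X → X.card ≤ T.card := by
    intro X hX
    exact hTmax X (Finset.mem_filter.mpr ⟨Finset.mem_powerset.mpr (Finset.subset_univ X), hX⟩)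
  set N := closedNbhd G S with hN
  have hSN : S ⊆ N := Finset.subset_union_left
  refine ⟨S ∪ (T \ N), ⟨?_, ?_⟩, Finset.subset_union_left⟩
  · -- stability
    intro x hx y hy hadj
    rcases Finset.mem_union.mp hx with hxS | hxT
    · rcases Finset.mem_union.mp hy with hyS | hyT
      · exact hS.1 x hxS y hyS hadj
      · have hyN : y ∈ N := Finset.mem_union.mpr (Or.inr (by
          simp only [Finset.mem_filter, Finset.mem_univ, true_and]
          exact ⟨x, hxS, hadj.symm⟩))
        exact (Finset.mem_sdiff.mp hyT).2 hyN
    · rcases Finset.mem_union.mp hy with hyS | hyT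
      · have hxN : x ∈ N := Finset.mem_union.mpr (Or.inr (by
          simp only [Finset.mem_filter, Finset.mem_univ, true_and]
          exact ⟨y, hyS, hadj⟩))
        exact (Finset.mem_sdiff.mp hxT).2 hxN
      · exact hTst x (Finset.mem_sdiff.mp hxT).1 y (Finset.mem_sdiff.mp hyT).1 hadj
  · -- maximality
    intro X hX
    have h1 : (T ∩ N).card ≤ S.card := by
      refine hS.2 (T ∩ N) Finset.inter_subset_right ?_
      intro a ha b hb
      exact hTst a (Finset.mem_inter.mp ha).1 b (Finset.mem_inter.mp hb).1
    have hdisj : Disjoint S (T \ N) := by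
      refine Finset.disjoint_left.mpr fun a haS haT => ?_
      exact (Finset.mem_sdiff.mp haT).2 (hSN haS)
    have h2 : (S ∪ (T \ N)).card = S.card + (T \ N).card :=
      Finset.card_union_of_disjoint hdisj
    have h3 : T.card = (T ∩ N).card + (T \ N).card := by
      rw [Finset.card_inter_add_card_sdiff]
    calc X.card ≤ T.card := hTmax' X hX
      _ = (T ∩ N).card + (T \ N).card := h3
      _ ≤ S.card + (T \ N).card := by omega
      _ = (S ∪ (T \ N)).card := h2.symm
end

section
/- For any finite simple graph G, if the family Ψ(G) of local maximum stable sets of G satisfies the accessibility property, then it also satisfies the exchange property; hence (V(G), Ψ(G)) is a greedoid. -/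
open Finset

variable {V : Type*}

/-!
Let `X, Y ∈ Ψ(G)` with `|X| = |Y| + 1`. Since `Y` is maximum stable in `N[Y]`, `X ⊄ N[Y]`.
Removing vertices of `X` one at a time by accessibility, we stop at a member `A ∪ {x}` of `Ψ(G)`
with `A ⊆ N[Y]` and `x ∈ X \ N[Y]`. A stable set `T ⊆ N[Y ∪ {x}]` then splits into the part
`R` lying in `N[Y] \ N[A]` and the rest, which lies in `N[A ∪ {x}]`; comparing the rest with
`A ∪ {x}` and `A ∪ R` with `Y` gives `|T| ≤ |Y| + 1`, i.e. `Y ∪ {x} ∈ Ψ(G)`.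
-/

theorem Accessible.exists_insert_mem_of_not_subset [DecidableEq V] {F : Set (Finset V)}
    (hF : Accessible F) {N X : Finset V} (hX : X ∈ F) (hXN : ¬X ⊆ N) :
    ∃ x ∈ X, x ∉ N ∧ ∃ A ⊆ N, insert x A ∈ F := by
  induction X using Finset.strongInduction with
  | H X ih =>
    have hXne : X.Nonempty := Finset.nonempty_iff_ne_empty.mpr (by rintro rfl; simp at hXN)
    obtain ⟨z, hz, hXz⟩ := hF X hX hXne
    by_cases hsub : X.erase z ⊆ N
    · have hzN : z ∉ N := fun hzN => hXN fun v hv =>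
        if hvz : v = z then hvz ▸ hzN else hsub (Finset.mem_erase.mpr ⟨hvz, hv⟩)
      exact ⟨z, hz, hzN, X.erase z, hsub, by rwa [Finset.insert_erase hz]⟩
    · obtain ⟨x, hx, hxN, hA⟩ := ih _ (Finset.erase_ssubset hz) hXz hsub
      exact ⟨x, Finset.mem_of_mem_erase hx, hxN, hA⟩

theorem StableSet.mono {G : SimpleGraph V} {S T : Finset V} (hS : StableSet G S) (hTS : T ⊆ S) :
    StableSet G T :=
  fun x hx y hy => hS x (hTS hx) y (hTS hy)

section ClosedNbhd

variable [Fintype V] [DecidableEq V] {G : SimpleGraph V} [DecidableRel G.Adj]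

theorem mem_closedNbhd {S : Finset V} {v : V} :
    v ∈ closedNbhd G S ↔ v ∈ S ∨ ∃ s ∈ S, G.Adj v s := by
  simp [closedNbhd]

theorem subset_closedNbhd (S : Finset V) : S ⊆ closedNbhd G S :=
  fun _ hv => mem_closedNbhd.mpr (Or.inl hv)

theorem closedNbhd_mono {A B : Finset V} (h : A ⊆ B) : closedNbhd G A ⊆ closedNbhd G B := by
  intro v hv
  rw [mem_closedNbhd] at hv ⊢
  exact hv.imp (@h v) fun ⟨s, hs, hadj⟩ => ⟨s, h hs, hadj⟩

theorem closedNbhd_empty : closedNbhd G (∅ : Finset V) = ∅ := by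
  ext v
  simp [mem_closedNbhd]

theorem mem_closedNbhd_insert {S : Finset V} {x v : V} :
    v ∈ closedNbhd G (insert x S) ↔ (v = x ∨ G.Adj v x) ∨ v ∈ closedNbhd G S := by
  simp only [mem_closedNbhd, Finset.mem_insert, exists_eq_or_imp]
  tauto

theorem StableSet.union {A B : Finset V} (hA : StableSet G A) (hB : StableSet G B)
    (hAB : Disjoint B (closedNbhd G A)) : StableSet G (A ∪ B) := by
  have hBA : ∀ a ∈ A, ∀ b ∈ B, ¬G.Adj b a := fun a ha b hb hadj =>
    Finset.disjoint_left.mp hAB hb (mem_closedNbhd.mpr (Or.inr ⟨a, ha, hadj⟩))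
  intro u hu v hv
  rcases Finset.mem_union.mp hu with hu | hu <;> rcases Finset.mem_union.mp hv with hv | hv
  · exact hA u hu v hv
  · exact fun hadj => hBA u hu v hv hadj.symm
  · exact hBA v hv u hu
  · exact hB u hu v hv

end ClosedNbhd

section Psi

variable [Fintype V] [DecidableEq V] {G : SimpleGraph V} [DecidableRel G.Adj]

theorem empty_mem_Psi : (∅ : Finset V) ∈ Psi G :=
  ⟨fun _ hx => absurd hx (Finset.notMem_empty _), fun T hT _ => by
    rw [closedNbhd_empty, Finset.subset_empty] at hT
    simp [hT]⟩

theorem insert_mem_Psi {Y A : Finset V} {x : V} (hY : Y ∈ Psi G) (hZ : insert x A ∈ Psi G)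
    (hA : A ⊆ closedNbhd G Y) (hx : x ∉ closedNbhd G Y) : insert x Y ∈ Psi G := by
  have hxY : x ∉ Y := fun h => hx (subset_closedNbhd Y h)
  refine ⟨?_, fun T hT hTstab => ?_⟩
  · rw [Finset.insert_eq, Finset.union_comm]
    refine hY.1.union (fun u hu v hv => ?_) (Finset.disjoint_singleton_left.mpr hx)
    rw [Finset.mem_singleton.mp hu, Finset.mem_singleton.mp hv]
    exact G.loopless.irrefl x
  set R := (T ∩ closedNbhd G Y) \ closedNbhd G A
  have hRT : R ⊆ T := Finset.sdiff_subset.trans Finset.inter_subset_left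
  have hRest : T \ R ⊆ closedNbhd G (insert x A) := by
    intro t ht
    obtain ⟨htT, htR⟩ := Finset.mem_sdiff.mp ht
    by_cases htY : t ∈ closedNbhd G Y
    · have htA : t ∈ closedNbhd G A := by
        by_contra htA
        exact htR (Finset.mem_sdiff.mpr ⟨Finset.mem_inter.mpr ⟨htT, htY⟩, htA⟩)
      exact closedNbhd_mono (Finset.subset_insert x A) htA
    · have htx := (mem_closedNbhd_insert.mp (hT htT)).resolve_right htY
      exact mem_closedNbhd_insert.mpr (Or.inl htx)
  have hRA : Disjoint R (closedNbhd G A) := Finset.sdiff_disjoint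
  have hAR_sub : A ∪ R ⊆ closedNbhd G Y :=
    Finset.union_subset hA (Finset.sdiff_subset.trans Finset.inter_subset_right)
  have hAR_stab : StableSet G (A ∪ R) :=
    (hZ.1.mono (Finset.subset_insert x A)).union (hTstab.mono hRT) hRA
  have hRest_card : (T \ R).card ≤ A.card + 1 :=
    (hZ.2 _ hRest (hTstab.mono Finset.sdiff_subset)).trans (Finset.card_insert_le x A)
  have hAR_card : A.card + R.card ≤ Y.card := by
    rw [← Finset.card_union_of_disjoint (hRA.symm.mono_left (subset_closedNbhd A))]
    exact hY.2 _ hAR_sub hAR_stab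
  have hT_card : (T \ R).card + R.card = T.card := Finset.card_sdiff_add_card_eq_card hRT
  rw [Finset.card_insert_of_notMem hxY]
  omega

theorem exchangeProp_Psi (h : Accessible (Psi G)) : ExchangeProp (Psi G) := by
  intro X hX Y hY hcard
  have hXN : ¬X ⊆ closedNbhd G Y := fun hsub => by
    have := hY.2 X hsub hX.1
    omega
  obtain ⟨x, hxX, hxN, A, hA, hZ⟩ := h.exists_insert_mem_of_not_subset hX hXN
  exact ⟨x, hxX, fun hxY => hxN (subset_closedNbhd Y hxY), insert_mem_Psi hY hZ hA hxN⟩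

end Psi

/-- If Ψ(G) satisfies accessibility, then it satisfies exchange, hence is a greedoid. -/
theorem psi_accessible_implies_exchange [Fintype V] [DecidableEq V] (G : SimpleGraph V)
    [DecidableRel G.Adj] (h : Accessible (Psi G)) :
    ExchangeProp (Psi G) ∧ IsGreedoid (Psi G) :=
  ⟨exchangeProp_Psi h, ⟨∅, empty_mem_Psi⟩, h, exchangeProp_Psi h⟩
end

section
/- If Ψ(G) is a greedoid and C is an induced cycle of G of length k ≥ 4, then no maximum stable set of C is a local maximum stable set of G; i.e., Ω(C_k) ∩ Ψ(G) = ∅. -/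
open Finset

variable {V : Type*}

/-!
Accessibility of Ψ(G) peels any nonempty `S ∈ Ψ(G)` down to a singleton `{x} ∈ Ψ(G)` with
`x ∈ S`, and `{x} ∈ Ψ(G)` forces `N(x)` to be a clique. On an induced cycle of length at
least four, the two cycle neighbours of any vertex are not adjacent, so no nonempty subset of
the cycle, in particular no maximum stable set of it, lies in Ψ(G).
-/

namespace SimpleGraph.Walk

variable {G : SimpleGraph V} {u : V}

theorem IsCycle.snd_penultimate_notMem_edges {c : G.Walk u u} (hc : c.IsCycle)
    (hlen : 4 ≤ c.length) : s(c.snd, c.penultimate) ∉ c.edges := by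
  have hedges : c.edges = s(u, c.snd) :: c.tail.edges := by
    conv_lhs => rw [← c.cons_tail_eq hc.not_nil]
    rfl
  rw [hedges, List.mem_cons, Sym2.eq_iff]
  rintro ((⟨hsnd, -⟩ | ⟨-, hpen⟩) | htail)
  · exact (c.adj_snd hc.not_nil).ne hsnd.symm
  · exact (c.adj_penultimate hc.not_nil).ne hpen
  · have hpen : c.getVert (c.length - 1) = c.getVert 2 := by
      simpa only [penultimate, getVert_tail] using hc.isPath_tail.eq_snd_of_mem_edges htail
    have := hc.getVert_injOn ⟨by omega, by omega⟩ ⟨by omega, by omega⟩ hpen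
    omega

theorem IsCycle.exists_adj_adj_notMem_edges [DecidableEq V] {c : G.Walk u u} (hc : c.IsCycle)
    (hlen : 4 ≤ c.length) {x : V} (hx : x ∈ c.support) :
    ∃ a b, G.Adj x a ∧ G.Adj x b ∧ a ≠ b ∧ a ∈ c.support ∧ b ∈ c.support ∧
      s(a, b) ∉ c.edges := by
  set c' := c.rotate x hx
  have hc' : c'.IsCycle := hc.rotate hx
  have hedges : ∀ e, e ∈ c'.edges ↔ e ∈ c.edges := fun e => (c.rotate_edges x hx).mem_iff
  have hsnd : s(x, c'.snd) ∈ c.edges := (hedges _).mp (c'.mk_start_snd_mem_edges hc'.not_nil)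
  have hpen : s(c'.penultimate, x) ∈ c.edges :=
    (hedges _).mp (c'.mk_penultimate_end_mem_edges hc'.not_nil)
  refine ⟨c'.snd, c'.penultimate, c'.adj_snd hc'.not_nil,
    (c'.adj_penultimate hc'.not_nil).symm, hc'.snd_ne_penultimate,
    c.snd_mem_support_of_mem_edges hsnd, c.fst_mem_support_of_mem_edges hpen, fun h => ?_⟩
  exact hc'.snd_penultimate_notMem_edges (by rwa [c.length_rotate]) ((hedges _).mpr h)

end SimpleGraph.Walk

theorem Accessible.exists_singleton_mem [DecidableEq V] {F : Set (Finset V)}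
    (hF : Accessible F) {S : Finset V} (hS : S ∈ F) (hne : S.Nonempty) :
    ∃ x ∈ S, ({x} : Finset V) ∈ F := by
  induction S using Finset.strongInduction with
  | H S ih =>
    obtain ⟨x, hx, hxF⟩ := hF S hS hne
    rcases (S.erase x).eq_empty_or_nonempty with h | h
    · obtain rfl : S = {x} := (Finset.erase_eq_empty_iff S x).mp h |>.resolve_left hne.ne_empty
      exact ⟨x, mem_singleton_self x, hS⟩
    · obtain ⟨y, hy, hyF⟩ := ih _ (erase_ssubset hx) hxF h
      exact ⟨y, mem_of_mem_erase hy, hyF⟩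

theorem stableSet_singleton (G : SimpleGraph V) (x : V) : StableSet G {x} := by
  simp [StableSet]

theorem stableSet_pair {G : SimpleGraph V} [DecidableEq V] {a b : V} (hab : ¬ G.Adj a b) :
    StableSet G {a, b} := by
  simp only [StableSet, mem_insert, mem_singleton]
  rintro x (rfl | rfl) y (rfl | rfl) <;> simp_all [G.adj_comm]

theorem adj_of_singleton_mem_psi [Fintype V] [DecidableEq V] {G : SimpleGraph V}
    [DecidableRel G.Adj] {x a b : V} (hx : ({x} : Finset V) ∈ Psi G) (ha : G.Adj x a)
    (hb : G.Adj x b) (hab : a ≠ b) : G.Adj a b := by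
  by_contra hnab
  have hsub : ({a, b} : Finset V) ⊆ closedNbhd G {x} := by
    intro t ht
    simp only [mem_insert, mem_singleton] at ht
    rcases ht with rfl | rfl <;> simp [closedNbhd, G.adj_comm, *]
  have := hx.2 _ hsub (stableSet_pair hnab)
  rw [card_pair hab, card_singleton] at this
  omega

theorem no_cycle_max_stable_in_psi_general [Fintype V] [DecidableEq V] (G : SimpleGraph V)
    [DecidableRel G.Adj] (hG : IsGreedoid (Psi G)) {v : V} (c : G.Walk v v)
    (hc : c.IsCycle) (hlen : 4 ≤ c.length)
    (hind : ∀ x ∈ c.support, ∀ y ∈ c.support, G.Adj x y → s(x, y) ∈ c.edges)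
    (S : Finset V) (hSsub : S ⊆ c.support.toFinset)
    (hSmax : ∀ T : Finset V, T ⊆ c.support.toFinset → StableSet G T → T.card ≤ S.card) :
    S ∉ Psi G := by
  intro hS
  have hne : S.Nonempty :=
    card_pos.mp (hSmax {v} (by simp) (stableSet_singleton G v))
  obtain ⟨x, hxS, hx⟩ := hG.2.1.exists_singleton_mem hS hne
  obtain ⟨a, b, hxa, hxb, hab, ha, hb, hnotMem⟩ :=
    hc.exists_adj_adj_notMem_edges hlen (List.mem_toFinset.mp (hSsub hxS))
  exact hnotMem (hind a ha b hb (adj_of_singleton_mem_psi hx hxa hxb hab))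

/-- If Ψ(G) is a greedoid and `c` is an induced cycle of length ≥ 4, then no maximum
stable set of the cycle is a local maximum stable set of `G`. -/
theorem no_cycle_max_stable_in_psi [Fintype V] [DecidableEq V] (G : SimpleGraph V)
    [DecidableRel G.Adj] (hG : IsGreedoid (Psi G)) {v : V} (c : G.Walk v v)
    (hc : c.IsCycle) (hlen : 4 ≤ c.length)
    (hind : ∀ x ∈ c.support, ∀ y ∈ c.support, G.Adj x y → s(x, y) ∈ c.edges)
    (S : Finset V) (hSsub : S ⊆ c.support.toFinset) (hSst : StableSet G S)
    (hSmax : ∀ T : Finset V, T ⊆ c.support.toFinset → StableSet G T → T.card ≤ S.card) :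
    S ∉ Psi G :=
  no_cycle_max_stable_in_psi_general G hG c hc hlen hind S hSsub hSmax
end

section
/- If S is a local maximum stable set of G admitting an accessibility chain starting at {x₁}, then x₁ is a simplicial vertex of G, i.e., the closed neighborhood of x₁ induces a complete subgraph. -/
open Finset

variable {V : Type*}

theorem stableSet_pair_iff (G : SimpleGraph V) [DecidableEq V] {u w : V} :
    StableSet G {u, w} ↔ ¬ G.Adj u w := by
  refine ⟨fun h => h u (by simp) w (by simp), fun huw => ?_⟩
  intro x hx y hy
  simp only [mem_insert, mem_singleton] at hx hy
  rcases hx with rfl | rfl <;> rcases hy with rfl | rfl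
  exacts [G.irrefl, huw, fun h => huw h.symm, G.irrefl]

/-- Two nonadjacent vertices of `N[x]` would form a stable set of `G[N[x]]` larger than `{x}`. -/
theorem isClique_closedNbhd_of_singleton_mem_psi [Fintype V] [DecidableEq V]
    (G : SimpleGraph V) [DecidableRel G.Adj] {x : V} (hx : {x} ∈ Psi G) :
    G.IsClique (closedNbhd G {x} : Set V) := by
  intro u hu w hw huw
  by_contra hadj
  have hpair : ({u, w} : Finset V) ⊆ closedNbhd G {x} :=
    insert_subset hu (singleton_subset_iff.2 hw)
  have hcard := hx.2 {u, w} hpair ((stableSet_pair_iff G).2 hadj)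
  rw [card_pair huw, card_singleton] at hcard
  omega

theorem chain_start_simplicial_general [Fintype V] [DecidableEq V] (G : SimpleGraph V)
    [DecidableRel G.Adj] (S : Finset V) (hne : S.Nonempty) (x₁ : V)
    (f : ℕ → Finset V)
    (hf : ∀ j, 1 ≤ j → j ≤ S.card → (f j).card = j ∧ f j ∈ Psi G)
    (hf1 : f 1 = {x₁}) :
    ∀ u ∈ closedNbhd G {x₁}, ∀ w ∈ closedNbhd G {x₁}, u ≠ w → G.Adj u w := by
  have hx₁ : {x₁} ∈ Psi G := hf1 ▸ (hf 1 le_rfl hne.card_pos).2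
  exact fun u hu w hw => isClique_closedNbhd_of_singleton_mem_psi G hx₁ hu hw

/-- If `S ∈ Ψ(G)` admits an accessibility chain starting at `{x₁}`, then `x₁` is a
simplicial vertex: the closed neighborhood of `x₁` induces a complete subgraph. -/
theorem chain_start_simplicial [Fintype V] [DecidableEq V] (G : SimpleGraph V)
    [DecidableRel G.Adj] (S : Finset V) (hS : S ∈ Psi G) (hne : S.Nonempty) (x₁ : V)
    (f : ℕ → Finset V) (hfS : f S.card = S)
    (hf : ∀ j, 1 ≤ j → j ≤ S.card → (f j).card = j ∧ f j ∈ Psi G)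
    (hmono : ∀ j, 1 ≤ j → j < S.card → f j ⊆ f (j + 1))
    (hf1 : f 1 = {x₁}) :
    ∀ u ∈ closedNbhd G {x₁}, ∀ w ∈ closedNbhd G {x₁}, u ≠ w → G.Adj u w :=
  chain_start_simplicial_general G S hne x₁ f hf hf1
end

section
/- Every maximum matching of a unicycle graph whose unique cycle has odd length is uniquely restricted. -/
open Finset

variable {V : Type*}

/-!
If two distinct matchings cover the same finite vertex set, their symmetric difference is a
nonempty disjoint union of cycles in which every vertex meets exactly one edge of each matching.
Consecutive edges of such a cycle therefore lie in different matchings, so the cycle is even.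
A graph all of whose cycles are odd has none, and a maximum matching has finitely many edges.
-/

open scoped symmDiff

namespace SimpleGraph

variable {G : SimpleGraph V}

theorem IsAlternating.even_length_of_isCycle {G' : SimpleGraph V} (halt : G.IsAlternating G')
    {u : V} {c : G.Walk u u} (hc : c.IsCycle) : Even c.length := by
  have h3 : 3 ≤ c.length := hc.three_le_length
  have hne : ∀ i, i + 2 ≤ c.length → c.getVert i ≠ c.getVert (i + 2) := fun i hi ↦ by
    simpa using hc.getVert_sub_one_ne_getVert_add_one (i := i + 1) (by omega)
  have hcolor : ∀ i < c.length,
      (G'.Adj (c.getVert i) (c.getVert (i + 1)) ↔ (G'.Adj u c.snd ↔ Even i)) := by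
    intro i hi
    induction i with
    | zero => simp [Walk.snd]
    | succ i ih =>
      rw [halt (hne i (by omega)).symm (c.adj_getVert_succ hi)
        (c.adj_getVert_succ (by omega : i < c.length)).symm, G'.adj_comm, ih (by omega),
        Nat.even_add_one]
      tauto
  have hlast := hcolor (c.length - 1) (by omega)
  rw [Nat.sub_add_cancel (by omega), c.getVert_length, G'.adj_comm] at hlast
  have hfirst : G'.Adj u c.snd ↔ ¬ G'.Adj u c.penultimate :=
    halt hc.snd_ne_penultimate (c.adj_snd hc.not_nil) (c.adj_penultimate hc.not_nil).symm
  have hpred : ¬ Even (c.length - 1) := by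
    rw [Walk.penultimate] at hfirst
    tauto
  simpa [Nat.sub_add_cancel (by omega : 1 ≤ c.length)] using Nat.even_add_one.mpr hpred

theorem Subgraph.IsPerfectMatching.exists_even_cycle_of_adj_of_not_adj [Finite V]
    {M M' : G.Subgraph} (hM : M.IsPerfectMatching) (hM' : M'.IsPerfectMatching) {v w : V}
    (hvw : M.Adj v w) (hvw' : ¬ M'.Adj v w) :
    ∃ (u : V) (c : G.Walk u u), c.IsCycle ∧ Even c.length := by
  set H := M.spanningCoe ∆ M'.spanningCoe
  have hH : H.Adj v w := by simp [H, symmDiff_def, hvw, hvw']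
  obtain ⟨c, hc, -⟩ := (hM.symmDiff_isCycles hM')
    |>.exists_cycle_toSubgraph_verts_eq_connectedComponentSupp
      (c := H.connectedComponentMk v) rfl ⟨w, hH⟩
  have hHG : H ≤ G := symmDiff_le_sup.trans (sup_le M.spanningCoe_le M'.spanningCoe_le)
  exact ⟨v, c.mapLe hHG, hc.mapLe hHG, by
    simpa using (hM.isAlternating_symmDiff_left hM').even_length_of_isCycle hc⟩

theorem Subgraph.IsMatching.isPerfectMatching_comap_induce {M : G.Subgraph} (hM : M.IsMatching)
    {s : Set V} (hs : M.verts = s) : (M.comap (Embedding.induce s).toHom).IsPerfectMatching := by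
  subst hs
  rw [Subgraph.isPerfectMatching_iff]
  rintro ⟨v, hv⟩
  obtain ⟨w, hvw, huniq⟩ := hM hv
  exact ⟨⟨w, M.edge_vert hvw.symm⟩, ⟨hvw.adj_sub, hvw⟩,
    fun y hy ↦ Subtype.ext (huniq y hy.2)⟩

/-- The cycle structure of a symmetric difference is available in Mathlib only for perfect
matchings on a finite vertex type, so we pass to the subgraph induced on the common vertex set. -/
theorem Subgraph.IsMatching.exists_even_cycle_of_adj_of_not_adj {M M' : G.Subgraph}
    (hM : M.IsMatching) (hM' : M'.IsMatching) (hverts : M'.verts = M.verts)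
    (hfin : M.verts.Finite) {v w : V} (hvw : M.Adj v w) (hvw' : ¬ M'.Adj v w) :
    ∃ (u : V) (c : G.Walk u u), c.IsCycle ∧ Even c.length := by
  have := hfin.to_subtype
  let f := Embedding.induce (G := G) M.verts
  obtain ⟨u, c, hc, heven⟩ := (hM.isPerfectMatching_comap_induce rfl)
    |>.exists_even_cycle_of_adj_of_not_adj (hM'.isPerfectMatching_comap_induce hverts)
      (v := ⟨v, M.edge_vert hvw⟩) (w := ⟨w, M.edge_vert hvw.symm⟩) ⟨hvw.adj_sub, hvw⟩
      (fun h ↦ hvw' h.2)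
  exact ⟨f u, c.map f.toHom, hc.map f.injective, by rwa [Walk.length_map]⟩

theorem Subgraph.IsMatching.edgeSet_eq_of_verts_eq {M M' : G.Subgraph} (hM : M.IsMatching)
    (hM' : M'.IsMatching) (hverts : M'.verts = M.verts) (hfin : M.verts.Finite)
    (hodd : ∀ ⦃v : V⦄ (c : G.Walk v v), c.IsCycle → Odd c.length) :
    M'.edgeSet = M.edgeSet := by
  have hadj : ∀ {N N' : G.Subgraph}, N.IsMatching → N'.IsMatching → N'.verts = N.verts →
      N.verts.Finite → ∀ {v w : V}, N.Adj v w → N'.Adj v w := by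
    intro N N' hN hN' hverts hfin v w hvw
    by_contra hvw'
    obtain ⟨u, c, hc, heven⟩ := hN.exists_even_cycle_of_adj_of_not_adj hN' hverts hfin hvw hvw'
    exact Nat.not_even_iff_odd.mpr (hodd c hc) heven
  ext e
  induction e using Sym2.ind with
  | _ v w => exact ⟨hadj hM' hM hverts.symm (hverts ▸ hfin), hadj hM hM' hverts hfin⟩

theorem Subgraph.IsMatching.finite_verts {M : G.Subgraph} (hM : M.IsMatching)
    (hE : M.edgeSet.Finite) : M.verts.Finite := by
  rw [hM.verts_eq_biUnion_edgeSet]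
  refine hE.biUnion fun e _ ↦ ?_
  induction e using Sym2.ind with
  | _ v w => exact Sym2.coe_mk ▸ Set.toFinite _

end SimpleGraph

open SimpleGraph

/-- An infinite edge set has junk `ncard` zero, which a single edge already beats. -/
theorem MaximumMatching.finite_edgeSet {G : SimpleGraph V} {M : G.Subgraph}
    (hM : MaximumMatching G M) : M.edgeSet.Finite := by
  by_contra hinf
  obtain ⟨e, he⟩ := Set.Infinite.nonempty hinf
  induction e using Sym2.ind with
  | _ v w =>
    have hvw : G.Adj v w := (Subgraph.mem_edgeSet.mp he).adj_sub
    have := hM.2 _ (Subgraph.IsMatching.subgraphOfAdj hvw)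
    simp [Set.Infinite.ncard hinf] at this

theorem odd_unicyclic_max_matching_ur_general (G : SimpleGraph V)
    (hodd : ∀ ⦃v : V⦄ (c : G.Walk v v), c.IsCycle → Odd c.length)
    (M : G.Subgraph) (hM : MaximumMatching G M) : UniquelyRestricted G M := by
  refine ⟨hM.1, fun M' hM' hsupp ↦ ?_⟩
  rw [hM'.support_eq_verts, hM.1.support_eq_verts] at hsupp
  exact hM.1.edgeSet_eq_of_verts_eq hM' hsupp (hM.1.finite_verts hM.finite_edgeSet) hodd

/-- Every maximum matching of a unicycle graph whose unique cycle has odd length is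
uniquely restricted. -/
theorem odd_unicyclic_max_matching_ur [DecidableEq V] (G : SimpleGraph V)
    (huni : Unicyclic G) (hconn : G.Connected)
    (hodd : ∀ ⦃v : V⦄ (c : G.Walk v v), c.IsCycle → Odd c.length)
    (M : G.Subgraph) (hM : MaximumMatching G M) : UniquelyRestricted G M :=
  odd_unicyclic_max_matching_ur_general G hodd M hM
end

section
/- Any set of pairwise nonadjacent pendant vertices of a graph G is a local maximum stable set of G. -/
open Finset

variable {V : Type*}

/-- Any stable set of pendant vertices of `G` is a local maximum stable set of `G`. -/
theorem pendant_stable_set_in_psi [Fintype V] [DecidableEq V] (G : SimpleGraph V)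
    [DecidableRel G.Adj] (S : Finset V) (hpend : ∀ v ∈ S, G.degree v = 1)
    (hst : StableSet G S) : S ∈ Psi G := by
  classical
  refine ⟨hst, ?_⟩
  intro T hTsub hTst
  -- unique neighbor property of pendant vertices
  have huniq : ∀ s ∈ S, ∀ a b, G.Adj a s → G.Adj b s → a = b := by
    intro s hs a b ha hb
    have hcard : (G.neighborFinset s).card = 1 := hpend s hs
    have h1 : (G.neighborFinset s).card ≤ 1 := le_of_eq hcard
    exact Finset.card_le_one.mp h1 a (by simpa using ha.symm) b (by simpa using hb.symm)
  set f : V → V := fun t =>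
    if t ∈ S then t else (if h : ∃ s ∈ S, G.Adj t s then h.choose else t) with hf
  apply Finset.card_le_card_of_injOn f
  · intro t ht
    by_cases hts : t ∈ S
    · simp [hf, hts]
    · have : t ∈ Finset.univ.filter (fun v => ∃ s ∈ S, G.Adj v s) := by
        have := hTsub ht
        simp only [closedNbhd, Finset.mem_union] at this
        tauto
      have hex : ∃ s ∈ S, G.Adj t s := by simpa using this
      simp only [hf, hts, if_false, dif_pos hex]
      exact hex.choose_spec.1
  · intro a ha b hb hab
    by_cases has : a ∈ S <;> by_cases hbs : b ∈ S
    · simpa [hf, has, hbs] using hab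
    · -- a ∈ S, b ∉ S : f a = a, f b is a neighbor of b in S
      have hex : ∃ s ∈ S, G.Adj b s := by
        have := hTsub hb
        simp only [closedNbhd, Finset.mem_union, Finset.mem_filter] at this
        tauto
      have hfb : f b = hex.choose := by simp [hf, hbs, dif_pos hex]
      have hfa : f a = a := by simp [hf, has]
      have hadj : G.Adj b a := by
        have h2 := hex.choose_spec.2
        rw [← hfb, ← hab, hfa] at h2
        exact h2
      exact absurd hadj (hTst b hb a ha)
    · have hex : ∃ s ∈ S, G.Adj a s := by
        have := hTsub ha
        simp only [closedNbhd, Finset.mem_union, Finset.mem_filter] at this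
        tauto
      have hfa : f a = hex.choose := by simp [hf, has, dif_pos hex]
      have hfb : f b = b := by simp [hf, hbs]
      have hadj : G.Adj a b := by
        have h2 := hex.choose_spec.2
        rw [← hfa, hab, hfb] at h2
        exact h2
      exact absurd hadj (hTst a ha b hb)
    · have hexa : ∃ s ∈ S, G.Adj a s := by
        have := hTsub ha
        simp only [closedNbhd, Finset.mem_union, Finset.mem_filter] at this
        tauto
      have hexb : ∃ s ∈ S, G.Adj b s := by
        have := hTsub hb
        simp only [closedNbhd, Finset.mem_union, Finset.mem_filter] at this
        tauto
      have hfa : f a = hexa.choose := by simp [hf, has, dif_pos hexa]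
      have hfb : f b = hexb.choose := by simp [hf, hbs, dif_pos hexb]
      have heq : hexa.choose = hexb.choose := by rw [← hfa, ← hfb, hab]
      exact huniq hexa.choose hexa.choose_spec.1 a b hexa.choose_spec.2
        (heq ▸ hexb.choose_spec.2)
end
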